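/- arXiv:1403.4418 — 2 statements merged into one kernel-verified Lean document; each statement's English description precedes it below -/
import Mathlib

section
/- Let γ be a holomorphic map on the half-plane H = {w : Re w > W₀}, with W₀ ≥ 1, such that H is forward invariant, Re γ(w) ≥ Re w + c for some c > 0, and |log(γ'(w))| ≤ 2K·|w|^{-3/2} for all w ∈ H (for some fixed branch of log with log γ'(w) → 0 as |w| → ∞). Then for all n ≥ 1 and all w ∈ H, |log((γ^n)'(w))| ≤ Σ_{k=0}^{n-1} 2K/(Re w + c·k) ^{3/2} ≤ K₁/√(Re w), where K₁ = 4K/c + 2K. -/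
/-! The chain rule writes `(γⁿ)'(w)` as the product of `γ'` along the orbit `γᵏ(w)`, so
`Σ_{k<n} L(γᵏ w)` is a logarithm of it. Along the orbit `Re γᵏ(w) ≥ Re w + ck`, so the `k`-th term
is at most `2K (Re w + ck)^{-3/2}`. Since `(a + c)^{-3/2} ≤ (2/c)(a^{-1/2} - (a + c)^{-1/2})`
(a discrete form of `∫ (a + cx)^{-3/2} dx = 2/(c√a)`), the sum of these bounds telescopes to at most
`2K (Re w)^{-3/2} + (4K/c)(Re w)^{-1/2}`, which is `≤ K₁/√(Re w)` as `Re w ≥ 1`. -/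

open Finset Set

theorem hasDerivAt_iterate_prod {𝕜 : Type*} [NontriviallyNormedField 𝕜] {f : 𝕜 → 𝕜} {x : 𝕜}
    (hf : ∀ k, DifferentiableAt 𝕜 f (f^[k] x)) (n : ℕ) :
    HasDerivAt (f^[n]) (∏ k ∈ range n, deriv f (f^[k] x)) x := by
  induction n with
  | zero => simpa using hasDerivAt_id x
  | succ n ih =>
    rw [Function.iterate_succ', prod_range_succ, mul_comm]
    exact (hf n).hasDerivAt.comp x ih

theorem add_mul_le_iterate_of_mapsTo {α : Type*} {f : α → α} {s : Set α} {φ : α → ℝ} {c : ℝ}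
    (hmaps : MapsTo f s s) (hf : ∀ x ∈ s, φ x + c ≤ φ (f x)) {x : α} (hx : x ∈ s) (k : ℕ) :
    φ x + c * k ≤ φ (f^[k] x) := by
  induction k with
  | zero => simp
  | succ k ih =>
    rw [Function.iterate_succ_apply']
    have := hf _ (hmaps.iterate k hx)
    push_cast
    linarith

theorem rpow_three_halves_eq_sqrt_pow {x : ℝ} (hx : 0 ≤ x) : x ^ ((3 : ℝ) / 2) = √x ^ 3 := by
  rw [Real.sqrt_eq_rpow, ← Real.rpow_natCast, ← Real.rpow_mul hx]
  norm_num

theorem one_div_pow_three_le {s t : ℝ} (hs : 0 < s) (hst : s < t) :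
    1 / t ^ 3 ≤ 2 / (t ^ 2 - s ^ 2) * (1 / s - 1 / t) := by
  have ht : 0 < t := hs.trans hst
  calc 1 / t ^ 3 ≤ 2 / (s * t * (s + t)) := by
        rw [div_le_div_iff₀ (by positivity) (by positivity)]
        nlinarith [mul_pos (mul_pos ht ht) (sub_pos.mpr hst),
          mul_pos (mul_pos ht (sub_pos.mpr hst)) (add_pos hs ht)]
    _ = 2 / (t ^ 2 - s ^ 2) * (1 / s - 1 / t) := by
        have : t ^ 2 - s ^ 2 ≠ 0 := by nlinarith
        field_simp
        ring

theorem one_div_rpow_three_halves_le {a c : ℝ} (ha : 0 < a) (hc : 0 < c) :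
    1 / (a + c) ^ ((3 : ℝ) / 2) ≤ 2 / c * (1 / √a - 1 / √(a + c)) := by
  have hac : 0 < a + c := by linarith
  have h := one_div_pow_three_le (Real.sqrt_pos.mpr ha)
    (Real.sqrt_lt_sqrt ha.le (lt_add_of_pos_right a hc))
  rwa [Real.sq_sqrt hac.le, Real.sq_sqrt ha.le, add_sub_cancel_left,
    ← rpow_three_halves_eq_sqrt_pow hac.le] at h

theorem sum_div_rpow_three_halves_le {a c B : ℝ} (ha : 0 < a) (hc : 0 < c) (hB : 0 ≤ B) (n : ℕ) :
    ∑ k ∈ range n, B / (a + c * k) ^ ((3 : ℝ) / 2) ≤ B / a ^ ((3 : ℝ) / 2) + 2 * B / (c * √a) := by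
  have hpos : ∀ k : ℕ, 0 < a + c * k := fun k => by positivity
  cases n with
  | zero => rw [sum_range_zero]; positivity
  | succ n =>
    rw [sum_range_succ']
    have step : ∀ k ∈ range n, B / (a + c * (k + 1 : ℕ)) ^ ((3 : ℝ) / 2) ≤
        2 * B / c * (1 / √(a + c * k) - 1 / √(a + c * (k + 1 : ℕ))) := by
      intro k _
      have e : a + c * ((k + 1 : ℕ) : ℝ) = a + c * k + c := by push_cast; ring
      rw [e]
      calc B / (a + c * k + c) ^ ((3 : ℝ) / 2) = B * (1 / (a + c * k + c) ^ ((3 : ℝ) / 2)) := by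
            ring
        _ ≤ B * (2 / c * (1 / √(a + c * k) - 1 / √(a + c * k + c))) :=
            mul_le_mul_of_nonneg_left (one_div_rpow_three_halves_le (hpos k) hc) hB
        _ = _ := by ring
    have htelescope := sum_le_sum step
    rw [← mul_sum, sum_range_sub', Nat.cast_zero, mul_zero, add_zero] at htelescope
    rw [Nat.cast_zero, mul_zero, add_zero]
    have htail : 0 ≤ 2 * B / c * (1 / √(a + c * n)) := by positivity
    calc _ ≤ 2 * B / c * (1 / √a - 1 / √(a + c * n)) + B / a ^ ((3 : ℝ) / 2) := by gcongr
      _ ≤ B / a ^ ((3 : ℝ) / 2) + 2 * B / (c * √a) := by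
        rw [mul_sub, mul_one_div (2 * B / c) √a, div_div]
        linarith

/-- Derivative estimate for iterates: if `γ` is holomorphic on the half-plane
`{Re w > W₀}`, leaves it invariant with `Re γ(w) ≥ Re w + c`, and a branch `L`
of `log γ'` satisfies `|L(w)| ≤ 2K·|w|^{-3/2}`, then the corresponding branch
`Σ_{k<n} L(γ^k(w))` of `log (γⁿ)'` is bounded by
`Σ_{k<n} 2K/(Re w + ck)^{3/2} ≤ K₁/√(Re w)` with `K₁ = 4K/c + 2K`. -/
theorem stmt_7 (γ : ℂ → ℂ) (W₀ c K : ℝ) (hW : 1 ≤ W₀) (hc : 0 < c) (hK : 0 < K)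
    (hhol : DifferentiableOn ℂ γ {w : ℂ | W₀ < w.re})
    (hinv : ∀ w : ℂ, W₀ < w.re → W₀ < (γ w).re)
    (hre : ∀ w : ℂ, W₀ < w.re → w.re + c ≤ (γ w).re)
    (L : ℂ → ℂ)
    (hL : ∀ w : ℂ, W₀ < w.re → Complex.exp (L w) = deriv γ w)
    (hLb : ∀ w : ℂ, W₀ < w.re → ‖L w‖ ≤ 2 * K * ‖w‖ ^ (-(3 : ℝ) / 2)) :
    ∀ n : ℕ, 1 ≤ n → ∀ w : ℂ, W₀ < w.re →
      Complex.exp (∑ k ∈ Finset.range n, L (γ^[k] w)) = deriv (γ^[n]) w ∧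
      ‖∑ k ∈ Finset.range n, L (γ^[k] w)‖
        ≤ ∑ k ∈ Finset.range n, 2 * K / (w.re + c * k) ^ ((3 : ℝ) / 2) ∧
      ∑ k ∈ Finset.range n, 2 * K / (w.re + c * k) ^ ((3 : ℝ) / 2)
        ≤ (4 * K / c + 2 * K) / Real.sqrt w.re := by
  intro n _ w hw
  have hmaps : MapsTo γ {w : ℂ | W₀ < w.re} {w : ℂ | W₀ < w.re} := hinv
  have horbit (k : ℕ) : W₀ < (γ^[k] w).re := hmaps.iterate k hw
  have hdrift (k : ℕ) : w.re + c * k ≤ (γ^[k] w).re :=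
    add_mul_le_iterate_of_mapsTo hmaps hre hw k
  have hw1 : 1 ≤ w.re := hW.trans hw.le
  have hpos (k : ℕ) : 0 < w.re + c * k := by positivity
  refine ⟨?_, ?_, ?_⟩
  · have hdiff (k : ℕ) : DifferentiableAt ℂ γ (γ^[k] w) :=
      hhol.differentiableAt ((isOpen_lt continuous_const Complex.continuous_re).mem_nhds (horbit k))
    rw [Complex.exp_sum, (hasDerivAt_iterate_prod hdiff n).deriv]
    exact prod_congr rfl fun k _ => hL _ (horbit k)
  · refine (norm_sum_le _ _).trans (sum_le_sum fun k _ => ?_)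
    calc ‖L (γ^[k] w)‖ ≤ 2 * K * ‖γ^[k] w‖ ^ (-(3 : ℝ) / 2) := hLb _ (horbit k)
      _ ≤ 2 * K * (w.re + c * k) ^ (-(3 : ℝ) / 2) := by
        gcongr 2 * K * ?_
        exact Real.rpow_le_rpow_of_nonpos (hpos k) ((hdrift k).trans (Complex.re_le_norm _))
          (by norm_num)
      _ = 2 * K / (w.re + c * k) ^ ((3 : ℝ) / 2) := by
        rw [neg_div, Real.rpow_neg (hpos k).le, ← div_eq_mul_inv]
  · have hsqrt : √w.re ≤ w.re ^ ((3 : ℝ) / 2) := by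
      rw [Real.sqrt_eq_rpow]
      exact Real.rpow_le_rpow_of_exponent_le hw1 (by norm_num)
    calc _ ≤ 2 * K / w.re ^ ((3 : ℝ) / 2) + 2 * (2 * K) / (c * √w.re) :=
          sum_div_rpow_three_halves_le (by positivity) hc (by positivity) n
      _ ≤ 2 * K / √w.re + 2 * (2 * K) / (c * √w.re) := by gcongr
      _ = (4 * K / c + 2 * K) / √w.re := by ring
end

section
/- Let a, b be complex numbers with Re a > 0 and |Im a / Re a| ≤ 1/2, writing z = a^{-1/2} for the principal branch. Then |Im(a^{-1/2})| ≤ (Re a)^{-1/2} · |Im a / Re a|. -/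
/-!
Write `a ^ (-1/2) = ‖a‖ ^ (-1/2) · exp (-i arg a / 2)`. The modulus factor is at most `(Re a) ^ (-1/2)`
since `Re a ≤ ‖a‖`, and `|sin (arg a / 2)| ≤ |arg a| / 2 ≤ |tan (arg a)| / 2 = |Im a / Re a| / 2`,
using `|x| ≤ |tan x|` on `(-π/2, π/2)`, which contains `arg a` because `Re a > 0`.
-/

open Real

theorem Real.abs_le_abs_tan {x : ℝ} (hx : |x| < π / 2) : |x| ≤ |tan x| := by
  rcases le_or_gt 0 x with h | h
  · rw [abs_of_nonneg h] at hx ⊢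
    exact (le_tan h hx).trans (le_abs_self _)
  · rw [abs_of_neg h] at hx ⊢
    have := le_tan (neg_nonneg.mpr h.le) hx
    rw [tan_neg] at this
    exact this.trans (neg_le_abs _)

theorem Complex.abs_arg_le_abs_im_div_re {a : ℂ} (ha : 0 < a.re) : |arg a| ≤ |a.im / a.re| := by
  rw [← tan_arg]
  exact Real.abs_le_abs_tan (abs_arg_lt_pi_div_two_iff.mpr (Or.inl ha))

theorem Complex.norm_rpow_neg_half_le {a : ℂ} (ha : 0 < a.re) : ‖a‖ ^ (-(1 / 2) : ℝ) ≤ (√a.re)⁻¹ := by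
  rw [sqrt_eq_rpow, ← rpow_neg ha.le]
  exact rpow_le_rpow_of_nonpos ha (re_le_norm a) (by norm_num)

theorem Complex.abs_im_cpow_neg_half_le {a : ℂ} (ha : 0 < a.re) :
    |(a ^ (-(1 / 2) : ℂ)).im| ≤ (√a.re)⁻¹ * (|a.im / a.re| / 2) := by
  have hsin : |Real.sin (arg a * (-(1 / 2)))| ≤ |a.im / a.re| / 2 := by
    calc |Real.sin (arg a * (-(1 / 2)))| ≤ |arg a * (-(1 / 2))| := abs_sin_le_abs
      _ = |arg a| / 2 := by rw [abs_mul]; norm_num [div_eq_mul_inv]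
      _ ≤ |a.im / a.re| / 2 := by linarith [abs_arg_le_abs_im_div_re ha]
  have hcast : (-(1 / 2) : ℂ) = ((-(1 / 2) : ℝ) : ℂ) := by push_cast; rfl
  rw [hcast, cpow_ofReal_im, abs_mul, abs_of_nonneg (by positivity)]
  exact mul_le_mul (norm_rpow_neg_half_le ha) hsin (abs_nonneg _) (by positivity)

theorem stmt_9_general (a : ℂ) (ha : 0 < a.re) :
    |(a ^ (-(1 / 2) : ℂ)).im| ≤ (Real.sqrt a.re)⁻¹ * |a.im / a.re| := by
  refine (Complex.abs_im_cpow_neg_half_le ha).trans ?_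
  gcongr
  exact half_le_self (abs_nonneg _)

/-- Bound on the imaginary part of the principal inverse square root:
if `Re a > 0` and `|Im a / Re a| ≤ 1/2`, then
`|Im (a^{-1/2})| ≤ (Re a)^{-1/2} · |Im a / Re a|`. -/
theorem stmt_9 (a : ℂ) (ha : 0 < a.re) (hratio : |a.im / a.re| ≤ 1 / 2) :
    |(a ^ (-(1 / 2) : ℂ)).im| ≤ (Real.sqrt a.re)⁻¹ * |a.im / a.re| :=
  stmt_9_general a ha
end
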